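/- Every complement minimally non-totally unimodular 0,1 matrix has odd size. That is, if A is a square 0,1 matrix such that every matrix in the complement orbit of A is minimally non-totally unimodular, then the size n of A is odd. -/

import Mathlib

/-!
A minimally non-totally unimodular matrix `B` of size at least `2` has `det B = ± 2` and an
adjugate with all entries `± 1`: its entries are proper minors, and by Jacobi's identity every
`2 × 2` minor of `adj B` is `det B` times a proper minor of `B`. Reducing `adj B * B = det B • 1`
modulo `2` then shows that every column of such a `0,1` matrix has even sum. If `A i c = 1`, the
column-`c` sums of `A` and of its row-`i` complement add up to `n + 1`, because every row other
than `i` carries exactly one `1` between the two matrices; both sums being even forces `n` odd.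
-/

/-- All the nonzero maximal (m×m) subdeterminants of `A` have the same absolute value. -/
def Equimodular {m n : ℕ} (A : Matrix (Fin m) (Fin n) ℚ) : Prop :=
  ∃ d : ℚ, ∀ g : Fin m ↪ Fin n,
    (A.submatrix id g).det ≠ 0 → |(A.submatrix id g).det| = d

/-- Every set of linearly independent rows of `A` forms an equimodular matrix. -/
def TotallyEquimodular {m n : ℕ} (A : Matrix (Fin m) (Fin n) ℚ) : Prop :=
  ∀ (k : ℕ) (e : Fin k ↪ Fin m),
    LinearIndependent ℚ (fun i => A (e i)) → Equimodular (A.submatrix e id)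

/-- `A` is not totally unimodular but every proper submatrix of `A` is. -/
def MinNonTU {m n : ℕ} (A : Matrix (Fin m) (Fin n) ℚ) : Prop :=
  ¬ A.IsTotallyUnimodular ∧
    ∀ (k l : ℕ) (e : Fin k ↪ Fin m) (f : Fin l ↪ Fin n), k < m ∨ l < n →
      (A.submatrix e f).IsTotallyUnimodular

/-- All entries of `A` are `0` or `1`. -/
def ZeroOne {m n : ℕ} (A : Matrix (Fin m) (Fin n) ℚ) : Prop :=
  ∀ i j, A i j = 0 ∨ A i j = 1

/-- Row-`i` complement of a `0,1` matrix: row `i` is kept, every other row is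
replaced by its mod-2 sum with row `i`. -/
def rowCompl {m n : ℕ} (A : Matrix (Fin m) (Fin n) ℚ) (i : Fin m) :
    Matrix (Fin m) (Fin n) ℚ :=
  Matrix.of fun r c => if r = i then A i c else if A r c = A i c then 0 else 1

/-- Column-`j` complement of a `0,1` matrix. -/
def colCompl {m n : ℕ} (A : Matrix (Fin m) (Fin n) ℚ) (j : Fin n) :
    Matrix (Fin m) (Fin n) ℚ :=
  Matrix.of fun r c => if c = j then A r j else if A r c = A r j then 0 else 1

/-- Membership in the complement orbit of `A`. -/
inductive InComplOrbit {m n : ℕ} (A : Matrix (Fin m) (Fin n) ℚ) :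
    Matrix (Fin m) (Fin n) ℚ → Prop
  | base : InComplOrbit A A
  | row (B : Matrix (Fin m) (Fin n) ℚ) (i : Fin m) :
      InComplOrbit A B → InComplOrbit A (rowCompl B i)
  | col (B : Matrix (Fin m) (Fin n) ℚ) (j : Fin n) :
      InComplOrbit A B → InComplOrbit A (colCompl B j)

open Matrix

section Jacobi

variable {R : Type*} [CommRing R]

theorem det_updateCol_single_one {k : ℕ} (M : Matrix (Fin (k + 1)) (Fin (k + 1)) R)
    (p i : Fin (k + 1)) :
    (M.updateCol p (Pi.single i 1)).det =
      (-1) ^ (i + p : ℕ) * (M.submatrix i.succAbove p.succAbove).det := by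
  rw [det_succ_column _ p, Fintype.sum_eq_single i fun b hb => by
    rw [updateCol_self, Pi.single_eq_of_ne hb, mul_zero, zero_mul]]
  rw [updateCol_self, Pi.single_eq_same, mul_one, submatrix_updateCol_succAbove]

theorem det_one_updateCol_updateCol {n : ℕ} {p q : Fin n} (hpq : p ≠ q) (u v : Fin n → R) :
    (((1 : Matrix (Fin n) (Fin n) R).updateCol p u).updateCol q v).det =
      u p * v q - u q * v p := by
  -- a rank-two perturbation of `1`, so `det (1 + U * V) = det (1 + V * U)` is a `2 × 2` determinant
  set U : Matrix (Fin n) (Fin 2) R := of fun r a =>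
    if a = 0 then u r - (if r = p then 1 else 0) else v r - (if r = q then 1 else 0)
  set V : Matrix (Fin 2) (Fin n) R := of fun a c =>
    if a = 0 then (if c = p then 1 else 0) else (if c = q then 1 else 0)
  have hY : ((1 : Matrix (Fin n) (Fin n) R).updateCol p u).updateCol q v = 1 + U * V := by
    ext r c
    simp only [updateCol_apply, Matrix.add_apply, mul_apply, Fin.sum_univ_two, of_apply, U, V,
      one_apply]
    norm_num
    split_ifs <;> simp_all
  have hVU : ∀ a b : Fin 2, (V * U) a b = if a = 0 then U p b else U q b := by
    intro a b
    by_cases ha : a = 0 <;> simp [V, mul_apply, ha, ite_mul, Finset.sum_ite_eq']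
  rw [hY, det_one_add_mul_comm, det_fin_two]
  simp only [Matrix.add_apply, hVU, one_apply, U, of_apply]
  norm_num [hpq, Ne.symm hpq]
  ring

/-- `e` and `f` enumerate the rows other than `c₁, c₂` and the columns other than `p, q`. -/
theorem exists_det_updateCol_single_updateCol_single {m : ℕ}
    (M : Matrix (Fin (m + 2)) (Fin (m + 2)) R) {p q c₁ c₂ : Fin (m + 2)} (hpq : p ≠ q)
    (hc : c₁ ≠ c₂) :
    ∃ (e f : Fin m → Fin (m + 2)) (k : ℕ), e.Injective ∧ f.Injective ∧
      ((M.updateCol p (Pi.single c₁ 1)).updateCol q (Pi.single c₂ 1)).det =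
        (-1) ^ k * (M.submatrix e f).det := by
  obtain ⟨q', rfl⟩ := Fin.exists_succAbove_eq hpq.symm
  obtain ⟨c₂', rfl⟩ := Fin.exists_succAbove_eq hc.symm
  have hsub : (M.updateCol (p.succAbove q') (Pi.single (c₁.succAbove c₂') 1)).submatrix
      c₁.succAbove p.succAbove =
        (M.submatrix c₁.succAbove p.succAbove).updateCol q' (Pi.single c₂' 1) := by
    ext r c
    simp only [submatrix_apply, updateCol_apply, Fin.succAbove_right_injective.eq_iff,
      Pi.single_apply]
  refine ⟨c₁.succAbove ∘ c₂'.succAbove, p.succAbove ∘ q'.succAbove,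
    (c₁ + p : ℕ) + (c₂' + q' : ℕ), Fin.succAbove_right_injective.comp
      Fin.succAbove_right_injective,
    Fin.succAbove_right_injective.comp Fin.succAbove_right_injective, ?_⟩
  rw [updateCol_comm _ hpq, det_updateCol_single_one, hsub, det_updateCol_single_one,
    submatrix_submatrix]
  ring

theorem mulVec_adjugate_col {n : ℕ} (B : Matrix (Fin n) (Fin n) R) (c : Fin n) :
    B *ᵥ (fun r => B.adjugate r c) = B.det • Pi.single c 1 := by
  ext r
  simp [mulVec, dotProduct, ← mul_apply, mul_adjugate, one_apply, Pi.single_apply]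

/-- Jacobi's identity for the `2 × 2` minors of the adjugate. -/
theorem exists_adjugate_minor_eq [IsDomain R] {m : ℕ} {B : Matrix (Fin (m + 2)) (Fin (m + 2)) R}
    (hB : B.det ≠ 0) {p q c₁ c₂ : Fin (m + 2)} (hpq : p ≠ q) (hc : c₁ ≠ c₂) :
    ∃ (e f : Fin m → Fin (m + 2)) (k : ℕ), e.Injective ∧ f.Injective ∧
      B.adjugate p c₁ * B.adjugate q c₂ - B.adjugate q c₁ * B.adjugate p c₂ =
        (-1) ^ k * B.det * (B.submatrix e f).det := by
  obtain ⟨e, f, k, he, hf, hdet⟩ := exists_det_updateCol_single_updateCol_single B hpq hc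
  refine ⟨e, f, k, he, hf, mul_left_cancel₀ hB ?_⟩
  set Y := ((1 : Matrix (Fin (m + 2)) (Fin (m + 2)) R).updateCol p
    (fun r => B.adjugate r c₁)).updateCol q (fun r => B.adjugate r c₂)
  have hBY : B * Y = (B.updateCol p (B.det • Pi.single c₁ 1)).updateCol q
      (B.det • Pi.single c₂ 1) := by
    rw [mul_updateCol, mul_updateCol, mul_one, mulVec_adjugate_col, mulVec_adjugate_col]
  calc B.det * (B.adjugate p c₁ * B.adjugate q c₂ - B.adjugate q c₁ * B.adjugate p c₂)
      = (B * Y).det := by rw [det_mul, det_one_updateCol_updateCol hpq]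
    _ = B.det * ((-1) ^ k * B.det * (B.submatrix e f).det) := by
      rw [hBY, det_updateCol_smul, updateCol_comm _ hpq, det_updateCol_smul,
        updateCol_comm _ hpq.symm, hdet]
      ring

end Jacobi

theorem exists_minor_rows_zero_one_ne_zero {K : Type*} [Field K] {m : ℕ}
    {M : Matrix (Fin (m + 2)) (Fin (m + 2)) K} (hM : M.det ≠ 0) :
    ∃ c₁ c₂, M 0 c₁ * M 1 c₂ - M 1 c₁ * M 0 c₂ ≠ 0 := by
  by_contra! h
  obtain ⟨c, hc⟩ : ∃ c, M 0 c ≠ 0 := by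
    by_contra! h0
    exact hM (det_eq_zero_of_row_eq_zero 0 h0)
  apply hM
  rw [← det_updateRow_add_smul_self M (i := 1) (j := 0) (by simp) (-(M 1 c / M 0 c))]
  refine det_eq_zero_of_row_eq_zero 1 fun j => ?_
  rw [updateRow_self, Pi.add_apply, Pi.smul_apply, smul_eq_mul]
  field_simp
  linear_combination -h j c

theorem mem_range_signType_cast_of_abs_eq {R : Type*} [Ring R] [LinearOrder R] {x y : R}
    (h : |x| = |y|) (hy : y ∈ Set.range (SignType.cast : SignType → R)) :
    x ∈ Set.range (SignType.cast : SignType → R) := by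
  obtain ⟨s, rfl⟩ := hy
  rcases abs_eq_abs.1 h with rfl | rfl
  exacts [⟨s, rfl⟩, ⟨-s, by simp⟩]

theorem mul_mem_range_signType_cast {R : Type*} [Ring R] {x y : R}
    (hx : x ∈ Set.range (SignType.cast : SignType → R))
    (hy : y ∈ Set.range (SignType.cast : SignType → R)) :
    x * y ∈ Set.range (SignType.cast : SignType → R) := by
  obtain ⟨s, rfl⟩ := hx
  obtain ⟨t, rfl⟩ := hy
  exact ⟨s * t, by simp⟩

theorem neg_one_pow_mem_range_signType_cast {R : Type*} [Ring R] (k : ℕ) :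
    (-1 : R) ^ k ∈ Set.range (SignType.cast : SignType → R) :=
  ⟨(-1) ^ k, by simp⟩

namespace MinNonTU

theorem det_submatrix_mem {n k : ℕ} {B : Matrix (Fin n) (Fin n) ℚ} (hB : MinNonTU B)
    (hk : k < n) {e f : Fin k → Fin n} (he : e.Injective) (hf : f.Injective) :
    (B.submatrix e f).det ∈ Set.range SignType.cast := by
  simpa using hB.2 k k ⟨e, he⟩ ⟨f, hf⟩ (.inl hk) k id id Function.injective_id
    Function.injective_id

theorem det_not_mem {n : ℕ} {B : Matrix (Fin n) (Fin n) ℚ} (hB : MinNonTU B) :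
    B.det ∉ Set.range SignType.cast := by
  refine fun hdet => hB.1 fun k e f he hf => ?_
  obtain hk | hk := lt_or_ge k n
  · exact hB.det_submatrix_mem hk he hf
  obtain rfl : k = n := le_antisymm (by simpa using Fintype.card_le_of_injective e he) hk
  exact mem_range_signType_cast_of_abs_eq (abs_det_submatrix_equiv_equiv
    (.ofBijective e he.bijective_of_finite) (.ofBijective f hf.bijective_of_finite) B) hdet

theorem det_ne_zero {n : ℕ} {B : Matrix (Fin n) (Fin n) ℚ} (hB : MinNonTU B) : B.det ≠ 0 :=
  fun h => hB.det_not_mem ⟨0, h.symm⟩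

theorem adjugate_mem {m : ℕ} {B : Matrix (Fin (m + 1)) (Fin (m + 1)) ℚ} (hB : MinNonTU B)
    (i j : Fin (m + 1)) : B.adjugate i j ∈ Set.range SignType.cast := by
  rw [adjugate_fin_succ_eq_det_submatrix]
  exact mul_mem_range_signType_cast (neg_one_pow_mem_range_signType_cast _)
    (hB.det_submatrix_mem (Nat.lt_succ_self m) Fin.succAbove_right_injective
      Fin.succAbove_right_injective)

theorem exists_adjugate_minor_eq_det_mul {m : ℕ} {B : Matrix (Fin (m + 2)) (Fin (m + 2)) ℚ}
    (hB : MinNonTU B) {p q c₁ c₂ : Fin (m + 2)} (hpq : p ≠ q) (hc : c₁ ≠ c₂) :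
    ∃ z ∈ Set.range SignType.cast,
      B.adjugate p c₁ * B.adjugate q c₂ - B.adjugate q c₁ * B.adjugate p c₂ = B.det * z := by
  obtain ⟨e, f, k, he, hf, h⟩ := exists_adjugate_minor_eq hB.det_ne_zero hpq hc
  refine ⟨_, mul_mem_range_signType_cast (neg_one_pow_mem_range_signType_cast k)
    (hB.det_submatrix_mem (by omega) he hf), ?_⟩
  rw [h]
  ring

theorem det_adjugate_ne_zero {n : ℕ} {B : Matrix (Fin n) (Fin n) ℚ} (hB : MinNonTU B) :
    B.adjugate.det ≠ 0 := by
  rw [det_adjugate]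
  exact pow_ne_zero _ hB.det_ne_zero

theorem det_eq_two_or_neg_two {m : ℕ} {B : Matrix (Fin (m + 2)) (Fin (m + 2)) ℚ}
    (hB : MinNonTU B) : B.det = 2 ∨ B.det = -2 := by
  obtain ⟨c₁, c₂, hne⟩ := exists_minor_rows_zero_one_ne_zero hB.det_adjugate_ne_zero
  have hc : c₁ ≠ c₂ := by
    rintro rfl
    exact hne (by ring)
  obtain ⟨_, ⟨w, rfl⟩, hz⟩ := hB.exists_adjugate_minor_eq_det_mul (p := 0) (q := 1) (by simp) hc
  obtain ⟨s, hs⟩ := mul_mem_range_signType_cast (hB.adjugate_mem 0 c₁) (hB.adjugate_mem 1 c₂)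
  obtain ⟨t, ht⟩ := mul_mem_range_signType_cast (hB.adjugate_mem 1 c₁) (hB.adjugate_mem 0 c₂)
  rw [← hs, ← ht] at hz hne
  have hd := hB.det_not_mem
  simp only [SignType.range_eq, Set.mem_insert_iff, Set.mem_singleton_iff, not_or] at hd
  cases s <;> cases t <;> cases w <;> simp at hz hne hd ⊢ <;> grind

theorem adjugate_ne_zero {m : ℕ} {B : Matrix (Fin (m + 2)) (Fin (m + 2)) ℚ} (hB : MinNonTU B)
    (i j : Fin (m + 2)) : B.adjugate i j ≠ 0 := by
  intro h0
  obtain ⟨j', hj'⟩ : ∃ j', B.adjugate i j' ≠ 0 := by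
    by_contra! h
    exact hB.det_adjugate_ne_zero (det_eq_zero_of_row_eq_zero i h)
  have hjj' : j ≠ j' := by
    rintro rfl
    exact hj' h0
  refine hB.det_adjugate_ne_zero (det_eq_zero_of_column_eq_zero j fun i' => ?_)
  obtain rfl | hii' := eq_or_ne i i'
  · exact h0
  -- a `2 × 2` minor with a zero entry is a sign, and a multiple of `det B = ± 2`
  obtain ⟨_, ⟨w, rfl⟩, hz⟩ := hB.exists_adjugate_minor_eq_det_mul hii' hjj'
  obtain ⟨a, ha⟩ := hB.adjugate_mem i' j
  obtain ⟨b, hb⟩ := hB.adjugate_mem i j'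
  rw [h0, ← ha, ← hb] at hz
  rw [← hb] at hj'
  rw [← ha]
  rcases hB.det_eq_two_or_neg_two with hd | hd <;>
    cases a <;> cases b <;> cases w <;> simp [hd] at hz hj' ⊢ <;> norm_num at hz

theorem sum_col_mem_zmultiples {m : ℕ} {B : Matrix (Fin (m + 2)) (Fin (m + 2)) ℚ}
    (hB : MinNonTU B) (h01 : ZeroOne B) (c : Fin (m + 2)) :
    ∑ r, B r c ∈ AddSubgroup.zmultiples (2 : ℚ) := by
  -- every entry of row `0` of `adj B` is `≡ 1 (mod 2)`, and `adj B * B = det B • 1 ≡ 0 (mod 2)`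
  have hsplit : ∑ r, B r c = (B.adjugate * B) 0 c + ∑ r, (1 - B.adjugate 0 r) * B r c := by
    rw [mul_apply, ← Finset.sum_add_distrib]
    exact Finset.sum_congr rfl fun r _ => by ring
  rw [hsplit, adjugate_mul]
  refine add_mem ?_ (sum_mem fun r _ => ?_)
  · rw [Matrix.smul_apply, one_apply, smul_eq_mul]
    split_ifs
    · rcases hB.det_eq_two_or_neg_two with hd | hd <;> rw [hd]
      exacts [⟨1, by simp⟩, ⟨-1, by simp⟩]
    · exact ⟨0, by simp⟩
  · obtain ⟨s, hs⟩ := hB.adjugate_mem 0 r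
    have hs0 := hB.adjugate_ne_zero 0 r
    rw [← hs] at hs0 ⊢
    cases s
    · exact absurd rfl hs0
    · rcases h01 r c with h | h <;> rw [h]
      exacts [⟨0, by simp⟩, ⟨1, by norm_num⟩]
    · exact ⟨0, by simp⟩

end MinNonTU

theorem zeroOne_rowCompl {m n : ℕ} {A : Matrix (Fin m) (Fin n) ℚ} (h01 : ZeroOne A)
    (i : Fin m) : ZeroOne (rowCompl A i) := by
  intro r c
  simp only [rowCompl, of_apply]
  split_ifs
  exacts [h01 i c, .inl rfl, .inr rfl]

theorem sum_rowCompl_add_sum {m n : ℕ} {A : Matrix (Fin m) (Fin n) ℚ} (h01 : ZeroOne A)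
    {i : Fin m} {c : Fin n} (hic : A i c = 1) :
    ∑ r, rowCompl A i r c + ∑ r, A r c = m + 1 := by
  have hterm : ∀ r, rowCompl A i r c + A r c = 1 + if r = i then 1 else 0 := by
    intro r
    by_cases hr : r = i
    · simp [rowCompl, hr, hic, one_add_one_eq_two]
    · rcases h01 r c with h | h <;> simp [rowCompl, hr, h, hic]
  rw [← Finset.sum_add_distrib, Finset.sum_congr rfl fun r _ => hterm r]
  simp [Finset.sum_add_distrib]

theorem stmt10 {n : ℕ} (A : Matrix (Fin n) (Fin n) ℚ) (h01 : ZeroOne A)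
    (h : ∀ B : Matrix (Fin n) (Fin n) ℚ, InComplOrbit A B → MinNonTU B) :
    Odd n := by
  obtain _ | _ | m := n
  · exact absurd (emptyRows_isTotallyUnimodular A) (h A .base).1
  · exact odd_one
  have hA := h A .base
  obtain ⟨i, c, hic⟩ : ∃ i c, A i c = 1 := by
    by_contra! hA1
    have hA0 : A = 0 := ext fun i c => (h01 i c).resolve_right (hA1 i c)
    exact hA.det_ne_zero (by rw [hA0, det_zero])
  have hsum := add_mem ((h _ (.row A i .base)).sum_col_mem_zmultiples (zeroOne_rowCompl h01 i) c)
    (hA.sum_col_mem_zmultiples h01 c)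
  rw [sum_rowCompl_add_sum h01 hic] at hsum
  obtain ⟨k, hk⟩ := AddSubgroup.mem_zmultiples_iff.1 hsum
  rw [zsmul_eq_mul] at hk
  have hk' : k * 2 = (m + 3 : ℤ) := by exact_mod_cast hk
  exact Nat.odd_iff.2 (by omega)
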